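/- Let G be a group, let P and K be subgroups of G such that every element of G can be written as p*k with p ∈ P and k ∈ K, let K⁺ be a normal subgroup of K, let V be a complex vector space, and let σ : P → GL(V) be a representation. Let W_G be the space of functions f : G → V with f(p*g) = σ(p)(f(g)) for all p ∈ P, g ∈ G, on which K acts by right translation (x·f)(g) = f(g*x), and let W_G^{K⁺} = {f ∈ W_G : f(g*u) = f(g) for all g ∈ G, u ∈ K⁺} be the subspace of K⁺-fixed vectors. Let V⁰ = {v ∈ V : σ(p)(v) = v for all p ∈ P ∩ K⁺}, and let W⁰ be the space of functions h : K → V⁰ with h(p*k) = σ(p)(h(k)) for all p ∈ P ∩ K, k ∈ K, and h(k*u) = h(k) for all k ∈ K, u ∈ K⁺, on which K acts by right translation. Then: (1) W_G^{K⁺} is stable under the right-translation action of K; (2) the map f ↦ f|_K is a linear isomorphism from W_G^{K⁺} onto W⁰ intertwining the K-actions; and (3) K⁺ acts trivially on W_G^{K⁺} and on W⁰, so both are representations of the quotient group K/K⁺. -/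
import Mathlib


/-- The subspace `V⁰ = V^{P ∩ K⁺}` of vectors fixed by `σ(p)` for all `p ∈ P ∩ K⁺`. -/
def fixedSubspace {G : Type} [Group G] (P K : Subgroup G) (Kp : Subgroup K)
    (V : Type) [AddCommGroup V] [Module ℂ V]
    (σ : P →* (V →ₗ[ℂ] V)ˣ) : Submodule ℂ V where
  carrier := {v | ∀ (p : G) (hp : p ∈ P) (hk : p ∈ K),
      (⟨p, hk⟩ : K) ∈ Kp → (σ ⟨p, hp⟩).val v = v}
  zero_mem' := by intro p hp hk _; simp
  add_mem' := by
    intro a b ha hb p hp hk hkp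
    simp [ha p hp hk hkp, hb p hp hk hkp]
  smul_mem' := by
    intro c v hv p hp hk hkp
    simp [hv p hp hk hkp]

/-- `W_G^{K⁺}`: the space of left `(P, σ)`-equivariant functions `f : G → V`
that are invariant under right translation by the subgroup `K⁺ ≤ K`. -/
def WinvG {G : Type} [Group G] (P K : Subgroup G) (Kp : Subgroup K)
    (V : Type) [AddCommGroup V] [Module ℂ V]
    (σ : P →* (V →ₗ[ℂ] V)ˣ) : Submodule ℂ (G → V) where
  carrier := {f | (∀ (p : P) (g : G), f (↑p * g) = (σ p).val (f g)) ∧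
      (∀ (g : G) (u : Kp), f (g * ↑↑u) = f g)}
  zero_mem' := ⟨by intro p g; simp, by intro g u; simp⟩
  add_mem' := by
    intro f₁ f₂ h₁ h₂
    exact ⟨fun p g => by simp [h₁.1 p g, h₂.1 p g],
           fun g u => by simp [h₁.2 g u, h₂.2 g u]⟩
  smul_mem' := by
    intro c f hf
    exact ⟨fun p g => by simp [hf.1 p g], fun g u => by simp [hf.2 g u]⟩

/-- `W⁰`: the space of functions `h : K → V` taking values in `V⁰ = V^{P ∩ K⁺}`,
left `(P ∩ K, σ)`-equivariant, and invariant under right translation by `K⁺`. -/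
def W0 {G : Type} [Group G] (P K : Subgroup G) (Kp : Subgroup K)
    (V : Type) [AddCommGroup V] [Module ℂ V]
    (σ : P →* (V →ₗ[ℂ] V)ˣ) : Submodule ℂ (K → V) where
  carrier := {h | (∀ k : K, h k ∈ fixedSubspace P K Kp V σ) ∧
      (∀ (p : G) (hp : p ∈ P) (hk : p ∈ K) (k : K),
        h (⟨p, hk⟩ * k) = (σ ⟨p, hp⟩).val (h k)) ∧
      (∀ (k : K) (u : Kp), h (k * ↑u) = h k)}
  zero_mem' := ⟨fun k => (fixedSubspace P K Kp V σ).zero_mem,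
    by intro p hp hk k; simp, by intro k u; simp⟩
  add_mem' := by
    intro h₁ h₂ m₁ m₂
    exact ⟨fun k => (fixedSubspace P K Kp V σ).add_mem (m₁.1 k) (m₂.1 k),
      fun p hp hk k => by simp [m₁.2.1 p hp hk k, m₂.2.1 p hp hk k],
      fun k u => by simp [m₁.2.2 k u, m₂.2.2 k u]⟩
  smul_mem' := by
    intro c h m
    exact ⟨fun k => (fixedSubspace P K Kp V σ).smul_mem c (m.1 k),
      fun p hp hk k => by simp [m.2.1 p hp hk k],
      fun k u => by simp [m.2.2 k u]⟩

section Aux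

variable {G : Type} [Group G] (P K : Subgroup G) (Kp : Subgroup K) [Kp.Normal]
    (V : Type) [AddCommGroup V] [Module ℂ V] (σ : P →* (V →ₗ[ℂ] V)ˣ)

theorem stabG (x : K) (f : WinvG P K Kp V σ) :
    (fun g => f.val (g * ↑x)) ∈ WinvG P K Kp V σ := by
  obtain ⟨h1, h2⟩ := f.2
  refine ⟨fun p g => by simpa [mul_assoc] using h1 p (g * ↑x), fun g u => ?_⟩
  have hu' : x⁻¹ * ↑u * x ∈ Kp := by
    simpa using Subgroup.Normal.conj_mem ‹Kp.Normal› _ u.2 x⁻¹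
  have := h2 (g * ↑x) ⟨x⁻¹ * ↑u * x, hu'⟩
  simp only [Subgroup.coe_mul, Subgroup.coe_inv] at this ⊢
  rw [show g * ↑↑u * ↑x = g * ↑x * ((↑x)⁻¹ * ↑↑u * ↑x) by group]
  simpa [mul_assoc] using this

theorem resMem (f : WinvG P K Kp V σ) :
    (fun k : K => f.val ↑k) ∈ W0 P K Kp V σ := by
  obtain ⟨h1, h2⟩ := f.2
  refine ⟨?_, ?_, ?_⟩
  · intro k p hp hk hkp
    have hc : k⁻¹ * ⟨p, hk⟩ * k ∈ Kp := by
      simpa using Subgroup.Normal.conj_mem ‹Kp.Normal› _ hkp k⁻¹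
    have := h2 ↑k ⟨k⁻¹ * ⟨p, hk⟩ * k, hc⟩
    simp only [Subgroup.coe_mul, Subgroup.coe_inv] at this
    calc (σ ⟨p, hp⟩).val (f.val ↑k) = f.val (p * ↑k) := (h1 ⟨p, hp⟩ ↑k).symm
      _ = f.val (↑k * ((↑k)⁻¹ * p * ↑k)) := by group
      _ = f.val ↑k := this
  · intro p hp hk k
    simpa using h1 ⟨p, hp⟩ ↑k
  · intro k u
    simpa using h2 ↑k u

variable (hPK : ∀ g : G, ∃ p ∈ P, ∃ k ∈ K, g = p * k)

theorem keyWD (h : W0 P K Kp V σ) (p p' : G) (hp : p ∈ P) (hp' : p' ∈ P)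
    (k k' : K) (heq : p * ↑k = p' * ↑k') :
    (σ ⟨p, hp⟩).val (h.val k) = (σ ⟨p', hp'⟩).val (h.val k') := by
  have hqP : p'⁻¹ * p ∈ P := mul_mem (inv_mem hp') hp
  have hqG : p'⁻¹ * p = ↑k' * (↑k)⁻¹ := by
    rw [eq_comm, mul_inv_eq_iff_eq_mul, mul_assoc, heq]; group
  have hqK : p'⁻¹ * p ∈ K := hqG ▸ mul_mem k'.2 (inv_mem k.2)
  have hk' : (⟨p'⁻¹ * p, hqK⟩ : K) * k = k' := by
    ext; simp [hqG, mul_assoc]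
  have := h.2.2.1 (p'⁻¹ * p) hqP hqK k
  rw [hk'] at this
  rw [this, ← Module.End.mul_apply, ← Units.val_mul, ← map_mul]
  congr 2
  ext
  simp

/-- Extension of `h : W⁰` to a function on `G`. -/
noncomputable def extFun (h : W0 P K Kp V σ) (g : G) : V :=
  (σ ⟨(hPK g).choose, (hPK g).choose_spec.1⟩).val
    (h.val ⟨(hPK g).choose_spec.2.choose, (hPK g).choose_spec.2.choose_spec.1⟩)

theorem extSpec (h : W0 P K Kp V σ) (g p : G) (hp : p ∈ P) (k : K)
    (heq : g = p * ↑k) : extFun P K Kp V σ hPK h g = (σ ⟨p, hp⟩).val (h.val k) := by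
  have h1 := (hPK g).choose_spec.1
  have h2 := (hPK g).choose_spec.2.choose_spec.1
  have h3 := (hPK g).choose_spec.2.choose_spec.2
  exact keyWD P K Kp V σ h _ p h1 hp ⟨_, h2⟩ k (by rw [← h3, ← heq])

theorem extMem (h : W0 P K Kp V σ) :
    extFun P K Kp V σ hPK h ∈ WinvG P K Kp V σ := by
  constructor
  · intro p g
    obtain ⟨p₀, hp₀, k₀, hk₀, hg⟩ := hPK g
    rw [extSpec P K Kp V σ hPK h g p₀ hp₀ ⟨k₀, hk₀⟩ hg,
      extSpec P K Kp V σ hPK h (↑p * g) (↑p * p₀) (mul_mem p.2 hp₀) ⟨k₀, hk₀⟩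
        (by rw [hg, mul_assoc]),
      show (⟨↑p * p₀, mul_mem p.2 hp₀⟩ : P) = p * ⟨p₀, hp₀⟩ from rfl, map_mul]
    rfl
  · intro g u
    obtain ⟨p₀, hp₀, k₀, hk₀, hg⟩ := hPK g
    rw [extSpec P K Kp V σ hPK h g p₀ hp₀ ⟨k₀, hk₀⟩ hg,
      extSpec P K Kp V σ hPK h (g * ↑↑u) p₀ hp₀ (⟨k₀, hk₀⟩ * ↑u)
        (by rw [hg]; simp [mul_assoc]),
      h.2.2.2 ⟨k₀, hk₀⟩ u]

/-- The restriction isomorphism `Φ : W_G^{K⁺} ≃ W⁰`. -/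
noncomputable def Phi : (WinvG P K Kp V σ) ≃ₗ[ℂ] (W0 P K Kp V σ) where
  toFun f := ⟨fun k => f.val ↑k, resMem P K Kp V σ f⟩
  map_add' f g := rfl
  map_smul' c f := rfl
  invFun h := ⟨extFun P K Kp V σ hPK h, extMem P K Kp V σ hPK h⟩
  left_inv f := by
    apply Subtype.ext
    funext g
    obtain ⟨p₀, hp₀, k₀, hk₀, hg⟩ := hPK g
    show extFun P K Kp V σ hPK ⟨fun k => f.val ↑k, _⟩ g = f.val g
    rw [extSpec P K Kp V σ hPK _ g p₀ hp₀ ⟨k₀, hk₀⟩ hg, hg]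
    exact (f.2.1 ⟨p₀, hp₀⟩ k₀).symm
  right_inv h := by
    apply Subtype.ext
    funext k
    show extFun P K Kp V σ hPK h ↑k = h.val k
    rw [extSpec P K Kp V σ hPK h ↑k 1 (one_mem P) k (by simp)]
    show ((σ 1).val) (h.val k) = h.val k
    simp

theorem stab0 (x : K) (h : W0 P K Kp V σ) :
    (fun k => h.val (k * x)) ∈ W0 P K Kp V σ := by
  obtain ⟨h1, h2, h3⟩ := h.2
  refine ⟨fun k => h1 (k * x), fun p hp hk k => ?_, fun k u => ?_⟩
  · show h.val (⟨p, hk⟩ * k * x) = (σ ⟨p, hp⟩).val (h.val (k * x))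
    rw [mul_assoc]; exact h2 p hp hk (k * x)
  have hu' : x⁻¹ * ↑u * x ∈ Kp := by
    simpa using Subgroup.Normal.conj_mem ‹Kp.Normal› _ u.2 x⁻¹
  have := h3 (k * x) ⟨x⁻¹ * ↑u * x, hu'⟩
  show h.val (k * ↑u * x) = h.val (k * x)
  rw [show k * ↑u * x = k * x * (x⁻¹ * ↑u * x) by group]
  simpa using this

/-- Right translation as a linear map on `W_G^{K⁺}`. -/
def rtG (x : K) : (WinvG P K Kp V σ) →ₗ[ℂ] (WinvG P K Kp V σ) where
  toFun f := ⟨fun g => f.val (g * ↑x), stabG P K Kp V σ x f⟩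
  map_add' f g := Subtype.ext rfl
  map_smul' c f := by apply Subtype.ext; funext g; simp

theorem rtG_apply (x : K) (f : WinvG P K Kp V σ) (g : G) :
    ((rtG P K Kp V σ x) f).val g = f.val (g * ↑x) := rfl

/-- Right translation as a linear map on `W⁰`. -/
def rt0 (x : K) : (W0 P K Kp V σ) →ₗ[ℂ] (W0 P K Kp V σ) where
  toFun h := ⟨fun k => h.val (k * x), stab0 P K Kp V σ x h⟩
  map_add' f g := Subtype.ext rfl
  map_smul' c f := by apply Subtype.ext; funext g; simp

theorem rt0_apply (x : K) (h : W0 P K Kp V σ) (k : K) :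
    ((rt0 P K Kp V σ x) h).val k = h.val (k * x) := rfl

/-- Right translation action of `K` on `W_G^{K⁺}` as a homomorphism to units. -/
def rhoKG : K →* ((WinvG P K Kp V σ) →ₗ[ℂ] (WinvG P K Kp V σ))ˣ where
  toFun x :=
    { val := rtG P K Kp V σ x
      inv := rtG P K Kp V σ x⁻¹
      val_inv := LinearMap.ext fun f => Subtype.ext <| funext fun g => by
        rw [Module.End.mul_apply, Module.End.one_apply, rtG_apply, rtG_apply]
        simp [mul_assoc]
      inv_val := LinearMap.ext fun f => Subtype.ext <| funext fun g => by
        rw [Module.End.mul_apply, Module.End.one_apply, rtG_apply, rtG_apply]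
        simp [mul_assoc] }
  map_one' := Units.ext <| LinearMap.ext fun f => Subtype.ext <| funext fun g => by
    rw [Units.val_one, Module.End.one_apply]
    exact congrArg f.val (by simp)
  map_mul' x y := Units.ext <| LinearMap.ext fun f => Subtype.ext <| funext fun g => by
    rw [Units.val_mul, Module.End.mul_apply]
    exact congrArg f.val (by simp [mul_assoc])

/-- Right translation action of `K` on `W⁰` as a homomorphism to units. -/
def rhoK0 : K →* ((W0 P K Kp V σ) →ₗ[ℂ] (W0 P K Kp V σ))ˣ where
  toFun x :=
    { val := rt0 P K Kp V σ x
      inv := rt0 P K Kp V σ x⁻¹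
      val_inv := LinearMap.ext fun h => Subtype.ext <| funext fun k => by
        rw [Module.End.mul_apply, Module.End.one_apply, rt0_apply, rt0_apply]
        simp [mul_assoc]
      inv_val := LinearMap.ext fun h => Subtype.ext <| funext fun k => by
        rw [Module.End.mul_apply, Module.End.one_apply, rt0_apply, rt0_apply]
        simp [mul_assoc] }
  map_one' := Units.ext <| LinearMap.ext fun h => Subtype.ext <| funext fun k => by
    rw [Units.val_one, Module.End.one_apply]
    exact congrArg h.val (by simp)
  map_mul' x y := Units.ext <| LinearMap.ext fun h => Subtype.ext <| funext fun k => by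
    rw [Units.val_mul, Module.End.mul_apply]
    exact congrArg h.val (by simp [mul_assoc])

end Aux

/-- Group-theoretic form of Theorem 3.1 (parahoric restriction commutes with
parabolic induction): if `G = P·K` and `K⁺ ⊴ K`, then (1) `W_G^{K⁺}` is stable
under right translation by `K`; (2) restriction `f ↦ f|_K` is a `K`-equivariant
linear isomorphism `W_G^{K⁺} ≃ W⁰`; (3) `K⁺` acts trivially on both spaces, so
both are representations of the quotient group `K/K⁺`. -/
theorem parahoric_restriction_of_induced {G : Type} [Group G]
    (P K : Subgroup G) (Kp : Subgroup K) [Kp.Normal]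
    (hPK : ∀ g : G, ∃ p ∈ P, ∃ k ∈ K, g = p * k)
    (V : Type) [AddCommGroup V] [Module ℂ V]
    (σ : P →* (V →ₗ[ℂ] V)ˣ) :
    -- (1) stability of W_G^{K⁺} under the right-translation action of K
    (∀ (x : K) (f : WinvG P K Kp V σ), (fun g => f.val (g * ↑x)) ∈ WinvG P K Kp V σ) ∧
    -- (2) restriction is a linear isomorphism onto W⁰ intertwining the K-actions
    (∃ Φ : WinvG P K Kp V σ ≃ₗ[ℂ] W0 P K Kp V σ,
      (∀ (f : WinvG P K Kp V σ) (k : K), (Φ f).val k = f.val ↑k) ∧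
      (∀ (x : K) (f : WinvG P K Kp V σ)
        (h : (fun g => f.val (g * ↑x)) ∈ WinvG P K Kp V σ),
        (Φ ⟨fun g => f.val (g * ↑x), h⟩).val = fun k => (Φ f).val (k * x))) ∧
    -- (3) K⁺ acts trivially on W_G^{K⁺} and on W⁰ ...
    (∀ (u : Kp) (f : WinvG P K Kp V σ) (g : G), f.val (g * ↑↑u) = f.val g) ∧
    (∀ (u : Kp) (h : W0 P K Kp V σ) (k : K), h.val (k * ↑u) = h.val k) ∧
    (∃ ρ : ↥K ⧸ Kp →* (↥(WinvG P K Kp V σ) →ₗ[ℂ] ↥(WinvG P K Kp V σ))ˣ,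
      ∀ (x : K) (f : WinvG P K Kp V σ),
        ((ρ (QuotientGroup.mk x)).val f).val = fun g => f.val (g * ↑x)) ∧
    (∃ ρ : ↥K ⧸ Kp →* (↥(W0 P K Kp V σ) →ₗ[ℂ] ↥(W0 P K Kp V σ))ˣ,
      ∀ (x : K) (h : W0 P K Kp V σ),
        ((ρ (QuotientGroup.mk x)).val h).val = fun k => h.val (k * x)) := by
  classical
  refine ⟨stabG P K Kp V σ, ⟨Phi P K Kp V σ hPK, fun f k => rfl, fun x f h => rfl⟩,
    fun u f g => f.2.2 g u, fun u h k => h.2.2.2 k u,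
    ⟨QuotientGroup.lift Kp (rhoKG P K Kp V σ) ?_, fun x f => rfl⟩,
    ⟨QuotientGroup.lift Kp (rhoK0 P K Kp V σ) ?_, fun x h => rfl⟩⟩
  · intro u hu
    apply Units.ext
    apply LinearMap.ext
    intro f
    apply Subtype.ext
    funext g
    show f.val (g * ↑u) = f.val g
    exact f.2.2 g ⟨u, hu⟩
  · intro u hu
    apply Units.ext
    apply LinearMap.ext
    intro h
    apply Subtype.ext
    funext k
    show h.val (k * u) = h.val k
    exact h.2.2.2 k ⟨u, hu⟩
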